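/- For all complex numbers s and t, the exponential generating function of the Laplace polynomials P_k is Σ_{k=0}^{∞} P_k(t) · s^k / k! = exp(st + s²/2), the series converging absolutely for all s and t. -/

import Mathlib

open Polynomial

/-! Put `f(z) = exp(zt + z²/2)`. Since `f' = (t + z) f`, induction on the defining recursion
gives `f⁽ᵏ⁾(z) = P_k(t + z) f(z)`, so the series is the Taylor series of the entire function `f`
at `0`, evaluated at `s`. Absolute convergence follows by comparing with the (convergent, hence
bounded) series at any point of larger modulus. -/

/-- The Laplace polynomials `P_k`, over `ℂ`. -/
noncomputable def laplaceP : ℕ → Polynomial ℂ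
  | 0 => 1
  | k + 1 => X * laplaceP k + derivative (laplaceP k)

open Filter

theorem summable_norm_mul_pow_of_tendsto_zero {𝕜 : Type*} [NormedDivisionRing 𝕜] {a : ℕ → 𝕜}
    {s u : 𝕜} (hu : Tendsto (fun k => a k * u ^ k) atTop (nhds 0)) (hsu : ‖s‖ < ‖u‖) :
    Summable fun k => ‖a k * s ^ k‖ := by
  obtain ⟨C, hC⟩ := hu.norm.bddAbove_range
  have hu₀ : 0 < ‖u‖ := (norm_nonneg s).trans_lt hsu
  have hle : ∀ k, ‖a k * s ^ k‖ ≤ C * (‖s‖ / ‖u‖) ^ k := fun k => calc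
    ‖a k * s ^ k‖ = ‖a k * u ^ k‖ * (‖s‖ / ‖u‖) ^ k := by
      simp only [norm_mul, norm_pow, div_pow]
      field_simp
    _ ≤ C * (‖s‖ / ‖u‖) ^ k := by gcongr; exact hC ⟨k, rfl⟩
  exact .of_nonneg_of_le (fun k => norm_nonneg _) hle <|
    (summable_geometric_of_lt_one (by positivity) ((div_lt_one hu₀).2 hsu)).mul_left C

theorem hasDerivAt_cexp_mul_add_sq_div_two (t z : ℂ) :
    HasDerivAt (fun z : ℂ => Complex.exp (z * t + z ^ 2 / 2))
      ((t + z) * Complex.exp (z * t + z ^ 2 / 2)) z := by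
  have h : HasDerivAt (fun z : ℂ => z * t + z ^ 2 / 2) (t + z) z := by
    simpa using ((hasDerivAt_id z).mul_const t).fun_add ((hasDerivAt_pow 2 z).div_const 2)
  simpa [mul_comm] using h.cexp

theorem iteratedDeriv_cexp_mul_add_sq_div_two (t : ℂ) (k : ℕ) :
    iteratedDeriv k (fun z : ℂ => Complex.exp (z * t + z ^ 2 / 2)) =
      fun z => (laplaceP k).eval (t + z) * Complex.exp (z * t + z ^ 2 / 2) := by
  induction k with
  | zero => simp [laplaceP]
  | succ k ih =>
    rw [iteratedDeriv_succ, ih]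
    funext z
    have hP : HasDerivAt (fun z : ℂ => (laplaceP k).eval (t + z))
        ((derivative (laplaceP k)).eval (t + z)) z := by
      simpa using ((laplaceP k).hasDerivAt (t + z)).comp_const_add t z
    rw [(hP.fun_mul (hasDerivAt_cexp_mul_add_sq_div_two t z)).deriv]
    simp only [laplaceP, eval_add, eval_mul, eval_X]
    ring

theorem hasSum_laplaceP_eval_mul_pow_div_factorial (s t : ℂ) :
    HasSum (fun k : ℕ => (laplaceP k).eval t * s ^ k / (k.factorial : ℂ))
      (Complex.exp (s * t + s ^ 2 / 2)) := by
  have hf : Differentiable ℂ (fun z : ℂ => Complex.exp (z * t + z ^ 2 / 2)) :=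
    fun z => (hasDerivAt_cexp_mul_add_sq_div_two t z).differentiableAt
  refine (Complex.hasSum_taylorSeries_of_entire hf 0 s).congr_fun fun k => ?_
  rw [iteratedDeriv_cexp_mul_add_sq_div_two]
  simp [div_eq_inv_mul, mul_comm]

/-- For all complex `s` and `t`, the series `Σ_k P_k(t)·s^k/k!` converges absolutely and
its sum is `exp(st + s²/2)`. -/
theorem laplaceP_genFun (s t : ℂ) :
    Summable (fun k : ℕ => ‖(laplaceP k).eval t * s ^ k / (k.factorial : ℂ)‖) ∧
      HasSum (fun k : ℕ => (laplaceP k).eval t * s ^ k / (k.factorial : ℂ))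
        (Complex.exp (s * t + s ^ 2 / 2)) := by
  refine ⟨?_, hasSum_laplaceP_eval_mul_pow_div_factorial s t⟩
  obtain ⟨u, hsu⟩ := NormedField.exists_lt_norm ℂ ‖s‖
  have hu := (hasSum_laplaceP_eval_mul_pow_div_factorial u t).summable.tendsto_atTop_zero
  simp only [mul_div_right_comm _ (_ ^ _)] at hu ⊢
  exact summable_norm_mul_pow_of_tendsto_zero hu hsu
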